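/- arXiv:2505.01629 — 3 statements merged into one kernel-verified Lean document; each statement's English description precedes it below -/
import Mathlib

section
/- Let n ≥ 2, let M^g be a mechanism for allocating m homogeneous divisible items among n agents, and define the mechanism M^c by: on cost profile c, run M^g on c (treating costs as utilities) to obtain the fractional allocation x = M^g(c), and output the fractional allocation x^c given by x^c_i(o) = (1 − x_i(o))/(n − 1) for every agent i and item o (i.e., each agent's bundle is distributed uniformly among the other n − 1 agents). Then M^g is truthful for goods if and only if M^c is truthful for chores. -/
open Finset

noncomputable section

/-- Value (cost or utility) of a fractional bundle `x` under additive item values `c`. -/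
def dotVal {m : ℕ} (c x : Fin m → ℝ) : ℝ := ∑ o, x o * c o

/-- `x` is a fractional allocation of the `m` items among the `n` agents. -/
def IsFracAlloc {n m : ℕ} (x : Fin n → Fin m → ℝ) : Prop :=
  (∀ i o, 0 ≤ x i o ∧ x i o ≤ 1) ∧ (∀ o, ∑ i, x i o = 1)

/-- A profile of additive item-value functions with nonnegative values. -/
def NonnegProfile {n m : ℕ} (c : Fin n → Fin m → ℝ) : Prop := ∀ i o, 0 ≤ c i o

/-- `M` is truthful for goods: no agent can strictly increase his utility by misreporting. -/
def FracTruthfulGoods {n m : ℕ} (M : (Fin n → Fin m → ℝ) → Fin n → Fin m → ℝ) : Prop :=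
  ∀ v : Fin n → Fin m → ℝ, NonnegProfile v → ∀ (i : Fin n) (v' : Fin m → ℝ), (∀ o, 0 ≤ v' o) →
    dotVal (v i) (M (Function.update v i v') i) ≤ dotVal (v i) (M v i)

/-- `M` is truthful for chores: no agent can strictly decrease his cost by misreporting. -/
def FracTruthfulChores {n m : ℕ} (M : (Fin n → Fin m → ℝ) → Fin n → Fin m → ℝ) : Prop :=
  ∀ c : Fin n → Fin m → ℝ, NonnegProfile c → ∀ (i : Fin n) (c' : Fin m → ℝ), (∀ o, 0 ≤ c' o) →
    dotVal (c i) (M c i) ≤ dotVal (c i) (M (Function.update c i c') i)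

/-- Distributing each agent's bundle uniformly among the other `n - 1` agents transforms
truthfulness for goods into truthfulness for chores, and vice versa. -/
theorem fracTruthfulGoods_iff_fracTruthfulChores {n m : ℕ} (hn : 2 ≤ n)
    (Mg Mc : (Fin n → Fin m → ℝ) → Fin n → Fin m → ℝ)
    (hAlloc : ∀ c, NonnegProfile c → IsFracAlloc (Mg c))
    (hMc : ∀ c i o, Mc c i o = (1 - Mg c i o) / ((n : ℝ) - 1)) :
    FracTruthfulGoods Mg ↔ FracTruthfulChores Mc := by
  have hpos : (0 : ℝ) < (n : ℝ) - 1 := by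
    have : (2 : ℝ) ≤ (n : ℝ) := by exact_mod_cast hn
    linarith
  have key : ∀ (p : Fin n → Fin m → ℝ) (c : Fin m → ℝ) (i : Fin n),
      dotVal c (Mc p i) = ((∑ o, c o) - dotVal c (Mg p i)) / ((n : ℝ) - 1) := by
    intro p c i
    simp only [dotVal, hMc, Finset.sum_div, ← Finset.sum_sub_distrib]
    congr 1; ext o; ring
  constructor
  · intro h c hc i c' hc'
    rw [key, key, div_le_div_iff_of_pos_right hpos]
    have := h c hc i c' hc'
    linarith
  · intro h v hv i v' hv'
    have := h v hv i v' hv'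
    rw [key, key, div_le_div_iff_of_pos_right hpos] at this
    linarith
end
end

section
/- Let n ≥ 2, let M^g be a mechanism for allocating m homogeneous divisible items among n agents, and define the mechanism M^c by: on cost profile c, run M^g on c (treating costs as utilities) to obtain the fractional allocation x = M^g(c), and output the fractional allocation x^c given by x^c_i(o) = (1 − x_i(o))/(n − 1) for every agent i and item o. Then M^g is envy-free for goods (on every input, interpreted as utilities) if and only if M^c is envy-free for chores (on every input, interpreted as costs). -/
open Finset

noncomputable section

/-- Fractional allocation `x` is envy-free for goods w.r.t. utility profile `v`. -/
def EFGoods {n m : ℕ} (v : Fin n → Fin m → ℝ) (x : Fin n → Fin m → ℝ) : Prop :=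
  ∀ i j : Fin n, dotVal (v i) (x j) ≤ dotVal (v i) (x i)

/-- Fractional allocation `x` is envy-free for chores w.r.t. cost profile `c`. -/
def EFChores {n m : ℕ} (c : Fin n → Fin m → ℝ) (x : Fin n → Fin m → ℝ) : Prop :=
  ∀ i j : Fin n, dotVal (c i) (x i) ≤ dotVal (c i) (x j)

/-- Distributing each agent's bundle uniformly among the other `n - 1` agents transforms
envy-freeness for goods into envy-freeness for chores, and vice versa. -/
theorem efGoods_iff_efChores {n m : ℕ} (hn : 2 ≤ n)
    (Mg Mc : (Fin n → Fin m → ℝ) → Fin n → Fin m → ℝ)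
    (hAlloc : ∀ c, NonnegProfile c → IsFracAlloc (Mg c))
    (hMc : ∀ c i o, Mc c i o = (1 - Mg c i o) / ((n : ℝ) - 1)) :
    (∀ v, NonnegProfile v → EFGoods v (Mg v)) ↔
      (∀ c, NonnegProfile c → EFChores c (Mc c)) := by
  have hpos : (0:ℝ) < (n : ℝ) - 1 := by
    have : (2:ℝ) ≤ (n:ℝ) := by exact_mod_cast hn
    linarith
  have key : ∀ c (i j : Fin n),
      dotVal (c i) (Mc c j) = ((∑ o, c i o) - dotVal (c i) (Mg c j)) / ((n:ℝ) - 1) := by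
    intro c i j
    simp only [dotVal, hMc, Finset.sum_div, ← Finset.sum_sub_distrib]
    congr 1; ext o
    field_simp
  constructor
  · intro hG c hc i j
    rw [key, key]
    gcongr
    linarith [hG c hc i j]
  · intro hC v hv i j
    have h := hC v hv i j
    rw [key, key] at h
    have h2 := (div_le_div_iff_of_pos_right hpos).mp h
    linarith
end
end

section
/- For homogeneous divisible items with two agents, if there exists a mechanism M that is truthful for chores and satisfies SW^c(c) ≥ δ · SW(M(c)) for every cost profile c (i.e., has efficiency ratio at least δ), then there exists a mechanism M' that is truthful for chores, anonymous, item-symmetric, and satisfies SW^c(c) ≥ δ · SW(M'(c)) for every cost profile c. -/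
open Finset

noncomputable section

/-- Optimal social welfare (social cost) for chores with two agents. -/
def SWopt {m : ℕ} (c : Fin 2 → Fin m → ℝ) : ℝ := ∑ o, min (c 0 o) (c 1 o)

/-- Social welfare (social cost) achieved by the allocation `x` under profile `c`. -/
def SWof {n m : ℕ} (c : Fin n → Fin m → ℝ) (x : Fin n → Fin m → ℝ) : ℝ :=
  ∑ i, dotVal (c i) (x i)

/-- `M` is anonymous: swapping the two agents' reports swaps their bundles. -/
def Anonymous {m : ℕ} (M : (Fin 2 → Fin m → ℝ) → Fin 2 → Fin m → ℝ) : Prop :=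
  ∀ c : Fin 2 → Fin m → ℝ, NonnegProfile c →
    (M (fun i => c (i + 1)) 0 = M c 1 ∧ M (fun i => c (i + 1)) 1 = M c 0)

/-- `M` is item-symmetric: permuting the items permutes the output accordingly. -/
def ItemSymmetric {m : ℕ} (M : (Fin 2 → Fin m → ℝ) → Fin 2 → Fin m → ℝ) : Prop :=
  ∀ (σ : Equiv.Perm (Fin m)) (c : Fin 2 → Fin m → ℝ), NonnegProfile c →
    ∀ (i : Fin 2) (o : Fin m), M (fun j o' => c j (σ o')) i o = M c i (σ o)

namespace SymAux

variable {m : ℕ}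

/-- The transformed profile: shift agents by `π` and permute items by `σ`. -/
def tp (π : Fin 2) (σ : Equiv.Perm (Fin m)) (c : Fin 2 → Fin m → ℝ) :
    Fin 2 → Fin m → ℝ := fun j o' => c (j + π) (σ o')

/-- The mechanism conjugated by the transformation `(π, σ)`. -/
def cm (M : (Fin 2 → Fin m → ℝ) → Fin 2 → Fin m → ℝ) (π : Fin 2) (σ : Equiv.Perm (Fin m))
    (c : Fin 2 → Fin m → ℝ) : Fin 2 → Fin m → ℝ :=
  fun i o => M (tp π σ c) (i + π) (σ.symm o)

lemma fin2_aa : ∀ a b : Fin 2, a + b + b = a := by decide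

lemma tp_nonneg {π : Fin 2} {σ : Equiv.Perm (Fin m)} {c : Fin 2 → Fin m → ℝ}
    (hc : NonnegProfile c) : NonnegProfile (tp π σ c) := fun i o => hc _ _

lemma tp_shift (π : Fin 2) (σ : Equiv.Perm (Fin m)) (c : Fin 2 → Fin m → ℝ) (i : Fin 2) :
    tp π σ c (i + π) = fun o => c i (σ o) := by
  funext o'; simp [tp, fin2_aa]

lemma dot_symm (f g : Fin m → ℝ) (σ : Equiv.Perm (Fin m)) :
    dotVal f (fun o => g (σ.symm o)) = dotVal (fun o => f (σ o)) g := by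
  unfold dotVal
  exact Fintype.sum_equiv σ (fun o => g o * f (σ o)) (fun o => g (σ.symm o) * f o)
    (fun o => by simp) |>.symm

lemma cm_dot (M : (Fin 2 → Fin m → ℝ) → Fin 2 → Fin m → ℝ) (π : Fin 2)
    (σ : Equiv.Perm (Fin m)) (c : Fin 2 → Fin m → ℝ) (i : Fin 2) (f : Fin m → ℝ) :
    dotVal f (cm M π σ c i) = dotVal (fun o => f (σ o)) (M (tp π σ c) (i + π)) :=
  dot_symm f (M (tp π σ c) (i + π)) σ

lemma tp_update (π : Fin 2) (σ : Equiv.Perm (Fin m)) (c : Fin 2 → Fin m → ℝ)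
    (i : Fin 2) (c' : Fin m → ℝ) :
    tp π σ (Function.update c i c') =
      Function.update (tp π σ c) (i + π) (fun o' => c' (σ o')) := by
  funext j o'
  by_cases h : j = i + π
  · subst h
    simp [tp, Function.update_apply, fin2_aa]
  · have h2 : j + π ≠ i := by
      intro h3; exact h (by rw [← h3, fin2_aa])
    simp [tp, Function.update_apply, h, h2]

end SymAux

open SymAux in
/-- If some truthful mechanism for chores with two agents has efficiency ratio at least `δ`,
then so does some truthful, anonymous, and item-symmetric mechanism. -/
theorem exists_anonymous_item_symmetric_truthful {m : ℕ} (δ : ℝ)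
    (M : (Fin 2 → Fin m → ℝ) → Fin 2 → Fin m → ℝ)
    (hAlloc : ∀ c, NonnegProfile c → IsFracAlloc (M c))
    (hTruthful : FracTruthfulChores M)
    (hEff : ∀ c, NonnegProfile c → δ * SWof c (M c) ≤ SWopt c) :
    ∃ M' : (Fin 2 → Fin m → ℝ) → Fin 2 → Fin m → ℝ,
      (∀ c, NonnegProfile c → IsFracAlloc (M' c)) ∧
      FracTruthfulChores M' ∧
      Anonymous M' ∧
      ItemSymmetric M' ∧
      (∀ c, NonnegProfile c → δ * SWof c (M' c) ≤ SWopt c) := by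
  classical
  set K := Fin 2 × Equiv.Perm (Fin m) with hK
  set N : ℝ := (Fintype.card K : ℝ) with hNdef
  have hN : 0 < N := by
    have h : 0 < Fintype.card K := Fintype.card_pos
    simp only [hNdef]
    exact_mod_cast h
  set M' : (Fin 2 → Fin m → ℝ) → Fin 2 → Fin m → ℝ :=
    fun c i o => (∑ k : K, cm M k.1 k.2 c i o) / N with hM'
  -- component allocation properties
  have cm_bounds : ∀ (k : K) c, NonnegProfile c → ∀ i o,
      0 ≤ cm M k.1 k.2 c i o ∧ cm M k.1 k.2 c i o ≤ 1 := by
    intro k c hc i o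
    exact (hAlloc _ (tp_nonneg hc)).1 _ _
  have cm_sum : ∀ (k : K) c, NonnegProfile c → ∀ o, ∑ i, cm M k.1 k.2 c i o = 1 := by
    intro k c hc o
    have := (hAlloc _ (tp_nonneg (π := k.1) (σ := k.2) hc)).2 (k.2.symm o)
    calc ∑ i, cm M k.1 k.2 c i o
        = ∑ i, M (tp k.1 k.2 c) (i + k.1) (k.2.symm o) := rfl
      _ = ∑ i, M (tp k.1 k.2 c) i (k.2.symm o) :=
          Fintype.sum_equiv (Equiv.addRight k.1) _ _ (fun i => rfl)
      _ = 1 := this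
  -- dotVal of the average
  have dot_avg : ∀ (f : Fin m → ℝ) (c : Fin 2 → Fin m → ℝ) (i : Fin 2),
      dotVal f (M' c i) = (∑ k : K, dotVal f (cm M k.1 k.2 c i)) / N := by
    intro f c i
    unfold dotVal
    simp only [hM', div_mul_eq_mul_div]
    rw [← Finset.sum_div]
    simp only [Finset.sum_mul]
    rw [Finset.sum_comm, Finset.sum_div]
  -- component truthfulness
  have cm_truth : ∀ (k : K) (c : Fin 2 → Fin m → ℝ), NonnegProfile c →
      ∀ (i : Fin 2) (c' : Fin m → ℝ), (∀ o, 0 ≤ c' o) →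
      dotVal (c i) (cm M k.1 k.2 c i) ≤
        dotVal (c i) (cm M k.1 k.2 (Function.update c i c') i) := by
    rintro ⟨π, σ⟩ c hc i c' hc'
    rw [cm_dot, cm_dot]
    have hfs : (fun o => c i (σ o)) = tp π σ c (i + π) := (tp_shift π σ c i).symm
    rw [hfs, tp_update]
    exact hTruthful (tp π σ c) (tp_nonneg hc) (i + π) (fun o' => c' (σ o')) (fun o => hc' _)
  -- component efficiency
  have cm_eff : ∀ (k : K) (c : Fin 2 → Fin m → ℝ), NonnegProfile c →
      δ * SWof c (cm M k.1 k.2 c) ≤ SWopt c := by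
    rintro ⟨π, σ⟩ c hc
    have h1 : SWof c (cm M π σ c) = SWof (tp π σ c) (M (tp π σ c)) := by
      unfold SWof
      calc ∑ i, dotVal (c i) (cm M π σ c i)
          = ∑ i, dotVal (tp π σ c (i + π)) (M (tp π σ c) (i + π)) := by
            refine Finset.sum_congr rfl fun i _ => ?_
            rw [cm_dot, tp_shift]
        _ = ∑ i, dotVal (tp π σ c i) (M (tp π σ c) i) :=
            Fintype.sum_equiv (Equiv.addRight π) _ _ (fun i => rfl)
    have h2 : SWopt (tp π σ c) = SWopt c := by
      unfold SWopt
      have key : ∀ o, min (tp π σ c 0 o) (tp π σ c 1 o) = min (c 0 (σ o)) (c 1 (σ o)) := by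
        intro o
        fin_cases π <;> simp [tp] <;> rw [min_comm]
      rw [Finset.sum_congr rfl (fun o _ => key o)]
      exact Fintype.sum_equiv σ (fun o => min (c 0 (σ o)) (c 1 (σ o)))
        (fun o => min (c 0 o) (c 1 o)) (fun o => rfl)
    calc δ * SWof c (cm M π σ c) = δ * SWof (tp π σ c) (M (tp π σ c)) := by rw [h1]
      _ ≤ SWopt (tp π σ c) := hEff _ (tp_nonneg hc)
      _ = SWopt c := h2
  -- component anonymity
  have fin2h : ∀ i π : Fin 2, i + π = i + 1 + (π + 1) := by decide
  have cm_swap : ∀ (π : Fin 2) (σ : Equiv.Perm (Fin m)) (c : Fin 2 → Fin m → ℝ) (i : Fin 2)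
      (o : Fin m), cm M π σ (fun j => c (j + 1)) i o = cm M (π + 1) σ c (i + 1) o := by
    intro π σ c i o
    have h1 : tp π σ (fun j => c (j + 1)) = tp (π + 1) σ c := by
      funext j o'; simp [tp, add_assoc]
    simp only [cm, h1, fin2h i π]
  -- component item symmetry
  have cm_perm : ∀ (π : Fin 2) (σ τ : Equiv.Perm (Fin m)) (c : Fin 2 → Fin m → ℝ) (i : Fin 2)
      (o : Fin m), cm M π σ (fun j o' => c j (τ o')) i o = cm M π (σ.trans τ) c i (τ o) := by
    intro π σ τ c i o
    have h1 : tp π σ (fun j o' => c j (τ o')) = tp π (σ.trans τ) c := by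
      funext j o'; simp [tp]
    have h2 : (σ.trans τ).symm (τ o) = σ.symm o := by simp
    simp only [cm, h1, h2]
  refine ⟨M', ?_, ?_, ?_, ?_, ?_⟩
  · -- allocation
    intro c hc
    constructor
    · intro i o
      constructor
      · exact div_nonneg (Finset.sum_nonneg fun k _ => (cm_bounds k c hc i o).1) hN.le
      · rw [div_le_one hN]
        calc ∑ k : K, cm M k.1 k.2 c i o ≤ ∑ _k : K, (1 : ℝ) :=
              Finset.sum_le_sum fun k _ => (cm_bounds k c hc i o).2
          _ = N := by simp [hNdef]
    · intro o
      have h : ∑ i, M' c i o = (∑ k : K, ∑ i, cm M k.1 k.2 c i o) / N := by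
        simp only [hM']
        rw [← Finset.sum_div, Finset.sum_comm]
      rw [h, Finset.sum_congr rfl (fun k _ => cm_sum k c hc o)]
      simp only [Finset.sum_const, nsmul_eq_mul, mul_one, Finset.card_univ]
      exact div_self hN.ne'
  · -- truthfulness
    intro c hc i c' hc'
    rw [dot_avg, dot_avg]
    exact (div_le_div_iff_of_pos_right hN).mpr
      (Finset.sum_le_sum fun k _ => cm_truth k c hc i c' hc')
  · -- anonymity
    intro c hc
    constructor
    · funext o
      simp only [hM']
      congr 1
      refine Fintype.sum_equiv
        (Equiv.prodCongr (Equiv.addRight (1 : Fin 2)) (Equiv.refl (Equiv.Perm (Fin m)))) _ _ ?_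
      rintro ⟨π, σ⟩
      simpa using cm_swap π σ c 0 o
    · funext o
      simp only [hM']
      congr 1
      refine Fintype.sum_equiv
        (Equiv.prodCongr (Equiv.addRight (1 : Fin 2)) (Equiv.refl (Equiv.Perm (Fin m)))) _ _ ?_
      rintro ⟨π, σ⟩
      simpa using cm_swap π σ c 1 o
  · -- item symmetry
    intro τ c hc i o
    simp only [hM']
    congr 1
    refine Fintype.sum_equiv
      (Equiv.prodCongr (Equiv.refl (Fin 2))
        (⟨fun σ => σ.trans τ, fun σ => σ.trans τ.symm,
          fun σ => by ext x; simp, fun σ => by ext x; simp⟩ :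
          Equiv.Perm (Fin m) ≃ Equiv.Perm (Fin m))) _ _ ?_
    rintro ⟨π, σ⟩
    simpa using cm_perm π σ τ c i o
  · -- efficiency
    intro c hc
    have hS : SWof c (M' c) = (∑ k : K, SWof c (cm M k.1 k.2 c)) / N := by
      unfold SWof
      rw [Finset.sum_congr rfl (fun i _ => dot_avg (c i) c i), ← Finset.sum_div,
        Finset.sum_comm]
    calc δ * SWof c (M' c) = (∑ k : K, δ * SWof c (cm M k.1 k.2 c)) / N := by
          rw [hS, ← Finset.mul_sum, mul_div_assoc]
      _ ≤ (∑ _k : K, SWopt c) / N :=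
          (div_le_div_iff_of_pos_right hN).mpr (Finset.sum_le_sum fun k _ => cm_eff k c hc)
      _ = SWopt c := by
          rw [Finset.sum_const, Finset.card_univ, nsmul_eq_mul]
          rw [hNdef]
          exact mul_div_cancel_left₀ _ (by exact_mod_cast Fintype.card_ne_zero)
end
end
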